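/- Let n = 3 and let z ∈ ℂ with |z| = 1 and Im z ≠ 0. Define K_z(x) = (z/|x|²)^{1/4} · K_{1/2}(z^{1/2}|x|) for x ∈ ℝ³ \ {0}, using principal branches, and let K₁ = K_z · 1_{{x : |x| ≤ 1}}. Then K₁ belongs to weak L³(ℝ³) with norm bounded uniformly in z, and there exists a constant C (uniform in z) such that ‖u ∗ K₁‖_{L^∞(ℝ³)} ≤ C ‖u‖_{L^{3/2,1}(ℝ³)} for all u in the Lorentz space L^{3/2,1}(ℝ³). -/

import Mathlib

/-!
For `ν = 1/2` the substitution `u = sinh (t/2)` turns the Bessel integral into a Gaussian one,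
`K_{1/2}(w) = √(π/(2w)) e^{-w}`, so `|K_z(x)| = √(π/2) e^{-Re(z^{1/2}) |x|} / |x| ≤ √(π/2) / |x|`
as soon as `Re z^{1/2} > 0`, i.e. off the negative real axis. A kernel bounded by `c / |x - x₀|`
has its superlevel sets inside balls, hence lies in weak `L^d`. By the layer-cake formula,
`∫_A |g| ≤ q ‖g‖_{L^{p,∞}} |A|^{1/q}` for conjugate exponents `p`, `q`; applied to the superlevel
sets of `|u|` this bounds `∫ |u(t)| |K(x - t)| dt` by `q ‖K‖_{L^{p,∞}} ‖u‖_{L^{q,1}}` for every `x`.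
-/

open MeasureTheory Complex ENNReal

noncomputable section

/-- The modified Bessel function of the second kind,
`K_ν(w) = ∫₀^∞ e^{-w cosh t} cosh(ν t) dt`, for `Re w > 0`. -/
def besselK (ν w : ℂ) : ℂ :=
  ∫ t in Set.Ioi (0 : ℝ), Complex.exp (-w * Real.cosh t) * Complex.cosh (ν * t)

/-- The resolvent kernel `K_z(x) = (z/|x|²)^{(n-2)/4} K_{(n-2)/2}(z^{1/2}|x|)`, the inverse
Fourier transform of `ξ ↦ 1/(-|ξ|² + z)`, with principal branches of the complex powers. -/
def resolventKernel (n : ℕ) (z : ℂ) (x : EuclideanSpace ℝ (Fin n)) : ℂ :=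
  (z / ((‖x‖ : ℂ)) ^ 2) ^ (((n : ℂ) - 2) / 4) *
    besselK (((n : ℂ) - 2) / 2) (z ^ ((1 : ℂ) / 2) * (‖x‖ : ℂ))

/-- The weak `L^p` quasinorm `sup_{λ>0} λ·μ{x : |g(x)|>λ}^{1/p}`. -/
def weakNorm {α : Type*} [MeasurableSpace α] (μ : Measure α) (p : ℝ) (g : α → ℂ) : ℝ≥0∞ :=
  ⨆ (l : ℝ) (_ : 0 < l), ENNReal.ofReal l * (μ {x | l < ‖g x‖}) ^ (1 / p)

/-- The Lorentz `L^{p,1}` norm `∫₀^∞ μ{x : |f(x)|>λ}^{1/p} dλ`. -/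
def lorentzNorm {α : Type*} [MeasurableSpace α] (μ : Measure α) (p : ℝ) (f : α → ℂ) : ℝ≥0∞ :=
  ∫⁻ l in Set.Ioi (0 : ℝ), (μ {x | l < ‖f x‖}) ^ (1 / p)

open Set Metric Module

lemma image_sinh_half_Ioi : (fun t : ℝ => Real.sinh (t / 2)) '' Ioi 0 = Ioi 0 := by
  refine Subset.antisymm ?_ fun u hu => ⟨2 * Real.arsinh u, ?_, by simp⟩
  · rintro _ ⟨t, ht, rfl⟩
    exact Real.sinh_pos_iff.2 (half_pos ht)
  · have : 0 < Real.arsinh u := Real.arsinh_pos_iff.2 hu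
    exact mem_Ioi.2 (by linarith)

lemma cosh_eq_one_add_two_mul_sinh_half_sq (t : ℝ) :
    Real.cosh t = 1 + 2 * Real.sinh (t / 2) ^ 2 := by
  conv_lhs => rw [← mul_div_cancel₀ t two_ne_zero]
  rw [Real.cosh_two_mul, Real.cosh_sq]; ring

lemma besselK_one_half {w : ℂ} (hw : 0 < w.re) :
    besselK (1 / 2) w = (Real.pi / (2 * w)) ^ (1 / 2 : ℂ) * exp (-w) := by
  have hsubst := integral_image_eq_integral_abs_deriv_smul (measurableSet_Ioi (a := (0 : ℝ)))
    (fun t _ => ((hasDerivAt_id t).div_const 2).sinh.hasDerivWithinAt)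
    (fun a _ b _ hab => by simpa using Real.sinh_injective hab)
    (fun u : ℝ => 2 * exp (-w * (1 + 2 * (u : ℂ) ^ 2)))
  simp only [id] at hsubst
  rw [image_sinh_half_Ioi] at hsubst
  have hgauss : ∫ u in Ioi (0 : ℝ), 2 * exp (-w * (1 + 2 * (u : ℂ) ^ 2)) =
      (Real.pi / (2 * w)) ^ (1 / 2 : ℂ) * exp (-w) := by
    have hsplit (u : ℝ) : 2 * exp (-w * (1 + 2 * (u : ℂ) ^ 2)) =
        2 * exp (-w) * exp (-(2 * w) * (u : ℂ) ^ 2) := by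
      rw [mul_assoc, ← exp_add]; ring_nf
    simp_rw [hsplit]
    rw [integral_const_mul, integral_gaussian_complex_Ioi (by simpa using hw)]
    ring
  rw [← hgauss, hsubst, besselK]
  refine setIntegral_congr_fun measurableSet_Ioi fun t _ => ?_
  rw [abs_of_pos (by simp; positivity), cosh_eq_one_add_two_mul_sinh_half_sq, real_smul]
  push_cast
  rw [one_div_mul_eq_div]
  ring

lemma re_cpow_one_half_pos {z : ℂ} (hz : z ∈ slitPlane) : 0 < (z ^ (1 / 2 : ℂ)).re := by
  have harg : z.arg < Real.pi := (arg_le_pi z).lt_of_ne (mem_slitPlane_iff_arg.1 hz).1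
  rw [cpow_def_of_ne_zero (slitPlane_ne_zero hz), exp_re]
  refine mul_pos (Real.exp_pos _) (Real.cos_pos_of_mem_Ioo ⟨?_, ?_⟩) <;>
  · simp only [log_im, mul_im, one_div, inv_re, inv_im]
    norm_num
    linarith [neg_pi_lt_arg z]

lemma norm_resolventKernel_three {z : ℂ} (hz : z ∈ slitPlane) (x : EuclideanSpace ℝ (Fin 3)) :
    ‖resolventKernel 3 z x‖ = √(Real.pi / 2) * Real.exp (-(z ^ (1 / 2 : ℂ)).re * ‖x‖) / ‖x‖ := by
  have hprod (a r : ℝ) (ha : 0 < a) (hr : 0 < r) :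
      (a / r ^ 2) ^ (1 / 4 : ℝ) * (Real.pi / (2 * (a ^ (1 / 2 : ℝ) * r))) ^ (1 / 2 : ℝ) =
        √(Real.pi / 2) / r := by
    rw [show (1 / 4 : ℝ) = 1 / 2 * (1 / 2) by norm_num, Real.rpow_mul (by positivity)]
    simp only [← Real.sqrt_eq_rpow]
    rw [← Real.sqrt_mul (by positivity), Real.sqrt_div' _ (by positivity), Real.sqrt_sq hr.le,
      show √a / r * (Real.pi / (2 * (√a * r))) = Real.pi / 2 / r ^ 2 by
        field_simp [(Real.sqrt_pos.2 ha).ne'],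
      Real.sqrt_div' _ (by positivity), Real.sqrt_sq hr.le]
  rcases eq_or_ne x 0 with rfl | hx
  · simp [resolventKernel, show (3 : ℂ) - 2 ≠ 0 by norm_num]
  have hr : 0 < ‖x‖ := norm_pos_iff.2 hx
  have hw : 0 < (z ^ (1 / 2 : ℂ) * ‖x‖).re := by
    simpa using mul_pos (re_cpow_one_half_pos hz) hr
  have h4 : (1 / 4 : ℂ) = ((1 / 4 : ℝ) : ℂ) := by push_cast; rfl
  have h2 : (1 / 2 : ℂ) = ((1 / 2 : ℝ) : ℂ) := by push_cast; rfl
  rw [resolventKernel, show ((3 : ℕ) - 2 : ℂ) / 4 = 1 / 4 by norm_num,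
    show ((3 : ℕ) - 2 : ℂ) / 2 = 1 / 2 by norm_num, besselK_one_half hw, norm_mul, norm_mul,
    norm_exp, h4, h2, norm_cpow_real, norm_cpow_real, norm_div, norm_div, norm_mul, norm_mul,
    norm_cpow_real]
  simp only [norm_pow, norm_real, norm_ofNat, Real.norm_eq_abs, abs_norm,
    abs_of_pos Real.pi_pos, re_mul_ofReal, neg_re]
  rw [← mul_assoc, hprod _ _ (norm_pos_iff.2 (slitPlane_ne_zero hz)) hr, div_mul_eq_mul_div,
    neg_mul]

lemma norm_resolventKernel_three_le {z : ℂ} (hz : z ∈ slitPlane) (x : EuclideanSpace ℝ (Fin 3)) :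
    ‖resolventKernel 3 z x‖ ≤ √(Real.pi / 2) / ‖x‖ := by
  rw [norm_resolventKernel_three hz]
  gcongr
  refine mul_le_of_le_one_right (Real.sqrt_nonneg _) (Real.exp_le_one_iff.2 ?_)
  simpa using mul_nonneg (re_cpow_one_half_pos hz).le (norm_nonneg x)

lemma lintegral_Ioi_ofReal_rpow_neg {p c : ℝ} (hp : 1 < p) (hc : 0 < c) :
    ∫⁻ s in Ioi c, ENNReal.ofReal (s ^ (-p)) = ENNReal.ofReal (c ^ (1 - p) / (p - 1)) := by
  rw [← ofReal_integral_eq_lintegral_ofReal (integrableOn_Ioi_rpow_of_lt (by linarith) hc)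
    ((ae_restrict_iff' measurableSet_Ioi).2
      (ae_of_all _ fun s hs => Real.rpow_nonneg (hc.trans hs).le _)),
    integral_Ioi_rpow_of_lt (by linarith) hc]
  congr 1
  rw [show -p + 1 = 1 - p by ring, show p - 1 = -(1 - p) by ring, div_neg, neg_div]

/-- The layer-cake bound `μ A · s + ∫_s^∞ (W / t) ^ p dt` for `∫_A |g|`, evaluated at the optimal
split point `s = W / b`, where `b ^ p = μ A`. -/
lemma weak_type_split_eq {p q W b : ℝ} (hpq : p.HolderConjugate q) (hW : 0 < W) (hb : 0 < b) :
    b ^ p * (W / b) + W ^ p * ((W / b) ^ (1 - p) / (p - 1)) = q * W * b ^ (p - 1) := by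
  rw [Real.div_rpow hW.le hb.le, Real.rpow_sub hW, Real.rpow_sub hb, Real.rpow_one,
    Real.rpow_one, Real.rpow_sub hb, Real.rpow_one, hpq.conjugate_eq]
  have := hpq.sub_one_ne_zero
  have : 0 < W ^ p := Real.rpow_pos_of_pos hW p
  have : 0 < b ^ p := Real.rpow_pos_of_pos hb p
  field_simp
  ring

section WeakType

variable {α : Type*} [MeasurableSpace α] {μ : Measure α} {p q W : ℝ} {g : α → ℂ}

lemma measure_lt_norm_le_of_weakNorm_le (hp : 0 < p) (hW : 0 ≤ W)
    (hgW : weakNorm μ p g ≤ ENNReal.ofReal W) {s : ℝ} (hs : 0 < s) :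
    μ {y | s < ‖g y‖} ≤ ENNReal.ofReal ((W / s) ^ p) := by
  have hle : ENNReal.ofReal s * μ {y | s < ‖g y‖} ^ (1 / p) ≤ ENNReal.ofReal W :=
    (le_iSup₂ (f := fun (l : ℝ) (_ : 0 < l) =>
      ENNReal.ofReal l * μ {y | l < ‖g y‖} ^ (1 / p)) s hs).trans hgW
  rw [← ENNReal.ofReal_rpow_of_nonneg (div_nonneg hW hs.le) hp.le,
    ← ENNReal.rpow_inv_le_iff hp, ← one_div, ENNReal.ofReal_div_of_pos hs,
    ENNReal.le_div_iff_mul_le (.inl (by simpa using hs)) (.inl ENNReal.ofReal_ne_top), mul_comm]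
  exact hle

lemma setLIntegral_enorm_le_of_weakNorm_le (hpq : p.HolderConjugate q) (hg : AEMeasurable g μ)
    (hW : 0 < W) (hgW : weakNorm μ p g ≤ ENNReal.ofReal W) (A : Set α) :
    ∫⁻ y in A, ‖g y‖ₑ ∂μ ≤ ENNReal.ofReal (q * W) * μ A ^ (1 / q) := by
  have hq := hpq.symm.pos
  rcases eq_or_ne (μ A) 0 with hA0 | hA0
  · simp [Measure.restrict_eq_zero.2 hA0]
  rcases eq_or_ne (μ A) ⊤ with hAtop | hAtop
  · rw [hAtop, ENNReal.top_rpow_of_pos (by positivity),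
      ENNReal.mul_top (ENNReal.ofReal_pos.2 (by positivity)).ne']
    exact le_top
  set a := (μ A).toReal
  have ha : 0 < a := ENNReal.toReal_pos hA0 hAtop
  set b := a ^ (1 / p)
  have hb : 0 < b := Real.rpow_pos_of_pos ha _
  have hbp : b ^ p = a := by
    rw [← Real.rpow_mul ha.le, one_div_mul_cancel hpq.ne_zero, Real.rpow_one]
  have hbq : b ^ (p - 1) = a ^ (1 / q) := by
    rw [← Real.rpow_mul ha.le, one_div, one_div, ← hpq.one_sub_inv]
    congr 1
    field_simp [hpq.ne_zero]
  have hs₀ : 0 < W / b := div_pos hW hb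
  calc ∫⁻ y in A, ‖g y‖ₑ ∂μ = ∫⁻ s in Ioi 0, μ.restrict A {y | s < ‖g y‖} := by
        simp_rw [← ofReal_norm]
        exact lintegral_eq_lintegral_meas_lt _ (ae_of_all _ fun _ => norm_nonneg _)
          hg.restrict.norm
    _ ≤ (∫⁻ _ in Ioc 0 (W / b), μ A) +
          ∫⁻ s in Ioi (W / b), ENNReal.ofReal (W ^ p) * ENNReal.ofReal (s ^ (-p)) := by
        rw [← Ioc_union_Ioi_eq_Ioi hs₀.le]
        refine (lintegral_union_le _ _ _).trans (add_le_add (lintegral_mono fun s => ?_)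
          (setLIntegral_mono' measurableSet_Ioi fun s hs => ?_))
        · exact (measure_mono (subset_univ _)).trans_eq (Measure.restrict_apply_univ A)
        · have hs : 0 < s := hs₀.trans hs
          rw [← ENNReal.ofReal_mul (by positivity), Real.rpow_neg hs.le, ← div_eq_mul_inv,
            ← Real.div_rpow hW.le hs.le]
          exact (Measure.restrict_le_self _).trans
            (measure_lt_norm_le_of_weakNorm_le hpq.pos hW.le hgW hs)
    _ = ENNReal.ofReal (b ^ p * (W / b) + W ^ p * ((W / b) ^ (1 - p) / (p - 1))) := by
        rw [setLIntegral_const, Real.volume_Ioc, lintegral_const_mul' _ _ ENNReal.ofReal_ne_top,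
          lintegral_Ioi_ofReal_rpow_neg hpq.lt hs₀, sub_zero, ← ENNReal.ofReal_mul,
          ENNReal.ofReal_add, hbp, ENNReal.ofReal_mul ha.le, ENNReal.ofReal_toReal hAtop]
        all_goals have := hpq.sub_one_pos; positivity
    _ = ENNReal.ofReal (q * W) * μ A ^ (1 / q) := by
        rw [weak_type_split_eq hpq hW hb, ENNReal.ofReal_mul (by positivity), hbq,
          ← ENNReal.ofReal_rpow_of_pos ha, ENNReal.ofReal_toReal hAtop]

lemma lintegral_enorm_mul_le_lorentzNorm_mul [SFinite μ] (hpq : p.HolderConjugate q) {f : α → ℂ}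
    (hf : AEMeasurable f μ) (hg : AEMeasurable g μ) (hW : 0 < W)
    (hgW : weakNorm μ p g ≤ ENNReal.ofReal W) :
    ∫⁻ x, ‖f x‖ₑ * ‖g x‖ₑ ∂μ ≤ ENNReal.ofReal (q * W) * lorentzNorm μ q f := by
  set ν := μ.withDensity fun x => ‖g x‖ₑ
  calc ∫⁻ x, ‖f x‖ₑ * ‖g x‖ₑ ∂μ = ∫⁻ x, ‖f x‖ₑ ∂ν := by
        rw [lintegral_withDensity_eq_lintegral_mul₀ hg.enorm hf.enorm]
        simp_rw [Pi.mul_apply, mul_comm]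
    _ = ∫⁻ s in Ioi 0, ν {x | s < ‖f x‖} := by
        simp_rw [← ofReal_norm]
        exact lintegral_eq_lintegral_meas_lt _ (ae_of_all _ fun _ => norm_nonneg _)
          (hf.mono_ac (withDensity_absolutelyContinuous _ _)).norm
    _ ≤ ∫⁻ s in Ioi 0, ENNReal.ofReal (q * W) * μ {x | s < ‖f x‖} ^ (1 / q) :=
        lintegral_mono fun s => by
          rw [withDensity_apply' _ _]
          exact setLIntegral_enorm_le_of_weakNorm_le hpq hg hW hgW _
    _ = ENNReal.ofReal (q * W) * lorentzNorm μ q f :=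
        lintegral_const_mul' _ _ ENNReal.ofReal_ne_top

end WeakType

section HaarSpace

variable {E : Type*} [NormedAddCommGroup E] [NormedSpace ℝ E] [MeasurableSpace E] [BorelSpace E]
  [FiniteDimensional ℝ E] [Nontrivial E] (μ : Measure E) [μ.IsAddHaarMeasure]

lemma weakNorm_le_of_norm_le_div_norm_sub {g : E → ℂ} {c : ℝ} (hc : 0 ≤ c) (x₀ : E)
    (hg : ∀ x, ‖g x‖ ≤ c / ‖x - x₀‖) :
    weakNorm μ (finrank ℝ E) g ≤
      ENNReal.ofReal (c * (μ (ball 0 1)).toReal ^ (1 / (finrank ℝ E : ℝ))) := by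
  have hd : finrank ℝ E ≠ 0 := finrank_pos.ne'
  refine iSup₂_le fun l hl => ?_
  have hsub : {x | l < ‖g x‖} ⊆ ball x₀ (c / l) := fun x hx => by
    have hlt : l < c / ‖x - x₀‖ := lt_of_lt_of_le hx (hg x)
    rcases (norm_nonneg (x - x₀)).eq_or_lt with h0 | hpos
    · rw [← h0, _root_.div_zero] at hlt
      exact absurd hl hlt.not_gt
    rw [lt_div_iff₀ hpos] at hlt
    rw [mem_ball, dist_eq_norm, lt_div_iff₀ hl]
    linarith
  calc ENNReal.ofReal l * μ {x | l < ‖g x‖} ^ (1 / (finrank ℝ E : ℝ))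
      ≤ ENNReal.ofReal l * (ENNReal.ofReal ((c / l) ^ finrank ℝ E) * μ (ball 0 1)) ^
          (1 / (finrank ℝ E : ℝ)) := by
        gcongr
        exact (measure_mono hsub).trans_eq (Measure.addHaar_ball μ x₀ (div_nonneg hc hl.le))
    _ = ENNReal.ofReal (c * (μ (ball 0 1)).toReal ^ (1 / (finrank ℝ E : ℝ))) := by
        rw [← ENNReal.ofReal_toReal measure_ball_lt_top.ne, ← ENNReal.ofReal_mul (by positivity),
          ENNReal.ofReal_rpow_of_nonneg (by positivity) (by positivity),
          ← ENNReal.ofReal_mul hl.le, Real.mul_rpow (by positivity) (by positivity), one_div,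
          Real.pow_rpow_inv_natCast (div_nonneg hc hl.le) hd, ENNReal.toReal_ofReal (by positivity)]
        congr 1
        field_simp

lemma eLpNorm_top_convolution_le_lorentzNorm {q c : ℝ}
    (hdq : (finrank ℝ E : ℝ).HolderConjugate q) (hc : 0 < c) {K u : E → ℂ}
    (hK : ∀ x, ‖K x‖ ≤ c / ‖x‖) (hu : AEMeasurable u μ) :
    eLpNorm (convolution u K (ContinuousLinearMap.mul ℂ ℂ) μ) ⊤ μ ≤
      ENNReal.ofReal (q * (c * (μ (ball 0 1)).toReal ^ (1 / (finrank ℝ E : ℝ)))) *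
        lorentzNorm μ q u := by
  have hV : 0 < (μ (ball 0 1)).toReal :=
    ENNReal.toReal_pos (measure_ball_pos μ 0 one_pos).ne' measure_ball_lt_top.ne
  rw [eLpNorm_exponent_top]
  refine eLpNormEssSup_le_of_ae_enorm_bound (ae_of_all _ fun x => ?_)
  set g : E → ℂ := fun t => ((c / ‖x - t‖ : ℝ) : ℂ)
  have hg : ∀ t, ‖g t‖ = c / ‖x - t‖ := fun t => by
    simp [g, abs_of_pos hc]
  calc ‖convolution u K (ContinuousLinearMap.mul ℂ ℂ) μ x‖ₑ
      ≤ ∫⁻ t, ‖u t‖ₑ * ‖K (x - t)‖ₑ ∂μ := by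
        rw [convolution_def]
        refine (enorm_integral_le_lintegral_enorm _).trans_eq ?_
        simp only [ContinuousLinearMap.mul_apply', enorm_mul]
    _ ≤ ∫⁻ t, ‖u t‖ₑ * ‖g t‖ₑ ∂μ := lintegral_mono fun t => by
        gcongr
        exact enorm_le_iff_norm_le.2 ((hK _).trans_eq (hg t).symm)
    _ ≤ _ := lintegral_enorm_mul_le_lorentzNorm_mul hdq hu (by fun_prop) (by positivity)
        (weakNorm_le_of_norm_le_div_norm_sub μ hc.le x fun t => by rw [hg, norm_sub_rev])

end HaarSpace

/-- For `n = 3` and `|z| = 1`, `Im z ≠ 0`, the part `K₁ = K_z·1_{|x|≤1}` of the resolvent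
kernel near the origin belongs to weak `L³(ℝ³)` with norm bounded uniformly in `z`, and
`‖u ∗ K₁‖_{L^∞(ℝ³)} ≤ C ‖u‖_{L^{3/2,1}(ℝ³)}` with `C` uniform in `z`. -/
theorem inner_kernel_bound_dim_three :
    ∃ C : ℝ, 0 < C ∧ ∀ z : ℂ, ‖z‖ = 1 → z.im ≠ 0 →
      weakNorm volume 3
        (Set.indicator {x : EuclideanSpace ℝ (Fin 3) | ‖x‖ ≤ 1} (resolventKernel 3 z)) ≤
        ENNReal.ofReal C ∧
      ∀ u : EuclideanSpace ℝ (Fin 3) → ℂ, AEStronglyMeasurable u volume →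
        lorentzNorm volume (3 / 2) u < ⊤ →
        eLpNorm
          (convolution u
            (Set.indicator {x : EuclideanSpace ℝ (Fin 3) | ‖x‖ ≤ 1} (resolventKernel 3 z))
            (ContinuousLinearMap.mul ℂ ℂ) volume)
          ⊤ volume ≤
        ENNReal.ofReal C * lorentzNorm volume (3 / 2) u := by
  set V := (volume (ball (0 : EuclideanSpace ℝ (Fin 3)) 1)).toReal
  have hV : 0 < V := ENNReal.toReal_pos (measure_ball_pos _ _ one_pos).ne' measure_ball_lt_top.ne
  have h3 : (finrank ℝ (EuclideanSpace ℝ (Fin 3)) : ℝ) = 3 := by simp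
  have hK {z : ℂ} (hz : z.im ≠ 0) (x : EuclideanSpace ℝ (Fin 3)) :
      ‖Set.indicator {x : EuclideanSpace ℝ (Fin 3) | ‖x‖ ≤ 1} (resolventKernel 3 z) x‖ ≤
        √(Real.pi / 2) / ‖x‖ :=
    (norm_indicator_le_norm_self _ _).trans
      (norm_resolventKernel_three_le (mem_slitPlane_iff.2 (.inr hz)) x)
  refine ⟨3 / 2 * (√(Real.pi / 2) * V ^ (1 / 3 : ℝ)), by positivity,
    fun z _ hz => ⟨?_, fun u hu _ => ?_⟩⟩
  · have hweak := weakNorm_le_of_norm_le_div_norm_sub volume (Real.sqrt_nonneg _) 0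
      fun x => (hK hz x).trans_eq (by rw [sub_zero])
    rw [h3] at hweak
    exact hweak.trans
      (ENNReal.ofReal_le_ofReal (le_mul_of_one_le_left (by positivity) (by norm_num)))
  · have hconv := eLpNorm_top_convolution_le_lorentzNorm volume (q := 3 / 2)
      (by rw [h3]; exact Real.holderConjugate_iff.2 ⟨by norm_num, by norm_num⟩)
      (by positivity) (hK hz) hu.aemeasurable
    rwa [h3] at hconv
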